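/- Let Z be a square-integrable real random variable, 𝒢 a sub-σ-algebra, and W a d-dimensional random vector with E[W | 𝒢] = 0 and E[‖W‖² | 𝒢] = d·Δt for a constant Δt > 0. Define z = (1/Δt) E[Z·W | 𝒢] ∈ ℝ^d componentwise. Then Δt · E[‖z‖²] ≤ d · E[Z²]. -/

import Mathlib

/-!
Conditional Cauchy–Schwarz gives `E[Z Wᵢ | 𝒢]² ≤ E[Z² | 𝒢] E[Wᵢ² | 𝒢]` for each coordinate.
Summing over `i` and using `E[‖W‖² | 𝒢] = d Δt` yields `Δt² ‖z‖² ≤ d Δt E[Z² | 𝒢]` almost surely,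
and taking expectations (tower property) finishes the proof.
-/

open MeasureTheory Filter

lemma discrim_le_zero_of_forall_rat {a b c : ℝ} (h : ∀ q : ℚ, 0 ≤ a * (q * q) + b * q + c) :
    discrim a b c ≤ 0 :=
  discrim_le_zero fun x => Rat.denseRange_cast.induction_on x
    (isClosed_le continuous_const (by fun_prop)) h

section ConditionalCauchySchwarz

variable {Ω : Type*} {m mΩ : MeasurableSpace Ω} {μ : Measure Ω} {X Y : Ω → ℝ}

lemma condExp_mul_add_sq_ae_eq (hX : MemLp X 2 μ) (hY : MemLp Y 2 μ) (t : ℝ) :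
    μ[fun ω => (t * X ω + Y ω) ^ 2 | m] =ᵐ[μ] fun ω =>
      μ[fun ω => X ω ^ 2 | m] ω * (t * t) + 2 * μ[fun ω => X ω * Y ω | m] ω * t
        + μ[fun ω => Y ω ^ 2 | m] ω := by
  have hX2 : Integrable (fun ω => X ω ^ 2) μ := hX.integrable_sq
  have hXY : Integrable (fun ω => X ω * Y ω) μ := hX.integrable_mul hY
  have hexpand : (fun ω => (t * X ω + Y ω) ^ 2) =
      (t ^ 2 • fun ω => X ω ^ 2) + ((2 * t) • fun ω => X ω * Y ω) + fun ω => Y ω ^ 2 := by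
    ext ω; simp only [Pi.add_apply, Pi.smul_apply, smul_eq_mul]; ring
  rw [hexpand]
  filter_upwards [condExp_add ((hX2.smul (t ^ 2)).add (hXY.smul (2 * t))) hY.integrable_sq m,
    condExp_add (hX2.smul (t ^ 2)) (hXY.smul (2 * t)) m, condExp_smul (m := m) (t ^ 2) fun ω => X ω ^ 2,
    condExp_smul (m := m) (2 * t) fun ω => X ω * Y ω] with ω h₁ h₂ h₃ h₄
  simp only [h₁, Pi.add_apply, h₂, h₃, h₄, Pi.smul_apply, smul_eq_mul]
  ring

lemma ae_condExp_quadratic_nonneg (hX : MemLp X 2 μ) (hY : MemLp Y 2 μ) (t : ℝ) :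
    ∀ᵐ ω ∂μ, 0 ≤ μ[fun ω => X ω ^ 2 | m] ω * (t * t) + 2 * μ[fun ω => X ω * Y ω | m] ω * t
        + μ[fun ω => Y ω ^ 2 | m] ω := by
  filter_upwards [condExp_nonneg (m := m) (ae_of_all μ fun ω => sq_nonneg (t * X ω + Y ω)),
    condExp_mul_add_sq_ae_eq hX hY t] with ω hnonneg heq
  rwa [← heq]

/-- Each `E[(tX + Y)² | m] ≥ 0` holds only almost everywhere, so the quadratic is controlled
simultaneously on the countable set of rational `t` before taking its discriminant. -/
theorem condExp_mul_sq_le (hX : MemLp X 2 μ) (hY : MemLp Y 2 μ) :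
    ∀ᵐ ω ∂μ, μ[fun ω => X ω * Y ω | m] ω ^ 2 ≤
      μ[fun ω => X ω ^ 2 | m] ω * μ[fun ω => Y ω ^ 2 | m] ω := by
  filter_upwards [ae_all_iff.2 fun q : ℚ => ae_condExp_quadratic_nonneg (m := m) hX hY q]
    with ω hω
  have := discrim_le_zero_of_forall_rat hω
  rw [discrim] at this
  linarith

theorem sum_condExp_mul_sq_le {ι : Type*} [Fintype ι] {V : ι → Ω → ℝ} (hX : MemLp X 2 μ)
    (hV : ∀ i, MemLp (V i) 2 μ) :
    ∀ᵐ ω ∂μ, ∑ i, μ[fun ω => X ω * V i ω | m] ω ^ 2 ≤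
      μ[fun ω => X ω ^ 2 | m] ω * μ[fun ω => ∑ i, V i ω ^ 2 | m] ω := by
  have hsum : μ[fun ω => ∑ i, V i ω ^ 2 | m] =ᵐ[μ] ∑ i, μ[fun ω => V i ω ^ 2 | m] := by
    simpa only [← Finset.sum_fn] using
      condExp_finsetSum (s := Finset.univ) (fun i _ => (hV i).integrable_sq) m
  filter_upwards [ae_all_iff.2 fun i => condExp_mul_sq_le (m := m) hX (hV i), hsum]
    with ω hCS hsumω
  rw [hsumω, Finset.sum_apply, Finset.mul_sum]
  exact Finset.sum_le_sum fun i _ => hCS i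

end ConditionalCauchySchwarz

theorem gradient_coefficient_error_bound_general
    {Ω : Type*} {mΩ : MeasurableSpace Ω} {μ : Measure Ω} [IsProbabilityMeasure μ]
    (m : MeasurableSpace Ω) (hm : m ≤ mΩ) (d : ℕ)
    (Z : Ω → ℝ) (hZ : MemLp Z 2 μ)
    (W : Ω → Fin d → ℝ) (hW : ∀ i, MemLp (fun ω => W ω i) 2 μ)
    (Δt : ℝ) (hΔt : 0 < Δt)
    (hW2 : μ[fun ω => ∑ i, W ω i ^ 2 | m] =ᵐ[μ] fun _ => (d : ℝ) * Δt)
    (z : Ω → Fin d → ℝ)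
    (hz : z = fun ω i => (1 / Δt) * (μ[fun ω => Z ω * W ω i | m]) ω) :
    Δt * ∫ ω, ∑ i, z ω i ^ 2 ∂μ ≤ (d : ℝ) * ∫ ω, Z ω ^ 2 ∂μ := by
  have hbound : ∫ ω, ∑ i, μ[fun ω => Z ω * W ω i | m] ω ^ 2 ∂μ ≤ d * Δt * ∫ ω, Z ω ^ 2 ∂μ :=
    calc _ ≤ ∫ ω, μ[fun ω => Z ω ^ 2 | m] ω * (d * Δt) ∂μ := by
          refine integral_mono_of_nonneg (ae_of_all _ fun ω => by positivity)
            (integrable_condExp.mul_const _) ?_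
          filter_upwards [sum_condExp_mul_sq_le (m := m) hZ hW, hW2] with ω hCS hW2ω
          rwa [hW2ω] at hCS
      _ = d * Δt * ∫ ω, Z ω ^ 2 ∂μ := by rw [integral_mul_const, integral_condExp hm, mul_comm]
  subst hz
  calc Δt * ∫ ω, ∑ i, (1 / Δt * μ[fun ω => Z ω * W ω i | m] ω) ^ 2 ∂μ
      = Δt⁻¹ * ∫ ω, ∑ i, μ[fun ω => Z ω * W ω i | m] ω ^ 2 ∂μ := by
        simp_rw [mul_pow, ← Finset.mul_sum, integral_const_mul]
        field_simp
    _ ≤ Δt⁻¹ * (d * Δt * ∫ ω, Z ω ^ 2 ∂μ) := by gcongr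
    _ = d * ∫ ω, Z ω ^ 2 ∂μ := by field_simp

theorem gradient_coefficient_error_bound
    {Ω : Type*} {mΩ : MeasurableSpace Ω} {μ : Measure Ω} [IsProbabilityMeasure μ]
    (m : MeasurableSpace Ω) (hm : m ≤ mΩ) (d : ℕ)
    (Z : Ω → ℝ) (hZ : MemLp Z 2 μ)
    (W : Ω → Fin d → ℝ) (hW : ∀ i, MemLp (fun ω => W ω i) 2 μ)
    (Δt : ℝ) (hΔt : 0 < Δt)
    (hW0 : ∀ i, μ[fun ω => W ω i | m] =ᵐ[μ] 0)
    (hW2 : μ[fun ω => ∑ i, W ω i ^ 2 | m] =ᵐ[μ] fun _ => (d : ℝ) * Δt)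
    (z : Ω → Fin d → ℝ)
    (hz : z = fun ω i => (1 / Δt) * (μ[fun ω => Z ω * W ω i | m]) ω) :
    Δt * ∫ ω, ∑ i, z ω i ^ 2 ∂μ ≤ (d : ℝ) * ∫ ω, Z ω ^ 2 ∂μ :=
  gradient_coefficient_error_bound_general m hm d Z hZ W hW Δt hΔt hW2 z hz
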